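/- Let μ be a translation-invariant percolation on ℤ². Then μ-almost surely, for every b ∈ ℤ and every cluster C of G_η such that the set {x ∈ ℤ : (x,b) ∈ C} is infinite, the set {x ∈ ℤ : the vertical edge {(x,b−1),(x,b)} is open and (x,b) ∈ C} is either empty or infinite. -/

import Mathlib

open MeasureTheory

/-- Vertices of the square lattice `ℤ²`. -/
abbrev Vertex : Type := ℤ × ℤ

/-- Edges of `ℤ²`, encoded as a base vertex together with a direction:
`false` is the horizontal edge from `v` to `v + (1,0)`, `true` the vertical
edge from `v` to `v + (0,1)`. -/
abbrev Edge : Type := Vertex × Bool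

/-- Percolation configurations `η : E(ℤ²) → {0,1}`. -/
abbrev Config : Type := Edge → Bool

/-- The displacement vector of an edge with direction `d`. -/
def edgeDir (d : Bool) : Vertex := if d then (0, 1) else (1, 0)

/-- `joins e u v` says that the edge `e` has endpoints `u` and `v`. -/
def joins (e : Edge) (u v : Vertex) : Prop :=
  (e.1 = u ∧ u + edgeDir e.2 = v) ∨ (e.1 = v ∧ v + edgeDir e.2 = u)

/-- The open subgraph `G_η` of `ℤ²`: two vertices are adjacent iff some open
edge joins them. -/
def openGraph (η : Config) : SimpleGraph Vertex where
  Adj u v := u ≠ v ∧ ∃ e : Edge, η e = true ∧ joins e u v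
  symm := by
    constructor
    rintro u v ⟨hne, e, he, hj⟩
    exact ⟨hne.symm, e, he, hj.symm⟩
  loopless := by
    constructor
    rintro u ⟨hne, -⟩
    exact hne rfl

/-- The half-plane restriction `HP_b(G_η)`: keep only open edges with both
endpoints having second coordinate `≥ b`. -/
def hpGraph (b : ℤ) (η : Config) : SimpleGraph Vertex where
  Adj u v := b ≤ u.2 ∧ b ≤ v.2 ∧ (openGraph η).Adj u v
  symm := by
    constructor
    rintro u v ⟨hu, hv, h⟩
    exact ⟨hv, hu, h.symm⟩
  loopless := by
    constructor
    rintro u ⟨-, -, h⟩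
    exact (openGraph η).ne_of_adj h rfl

/-- `C` is a cluster (connected component) of `G_η`. -/
def IsCluster (η : Config) (C : Set Vertex) : Prop :=
  ∃ v : Vertex, C = {u | (openGraph η).Reachable v u}

/-- `C` is a cluster of the half-plane restriction `HP_b(G_η)`: the component
of some vertex lying in the half-plane `{y ≥ b}`. -/
def IsClusterHP (b : ℤ) (η : Config) (C : Set Vertex) : Prop :=
  ∃ v : Vertex, b ≤ v.2 ∧ C = {u | (hpGraph b η).Reachable v u}

/-- The dual configuration `η*`: a dual edge is open iff the primal edge it
crosses is closed.  The dual edge with base `(a,c)` and direction `false`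
(going to `(a+1,c)`) crosses the primal vertical edge `{(a+1,c),(a+1,c+1)}`;
the dual edge with base `(a,c)` and direction `true` (going to `(a,c+1)`)
crosses the primal horizontal edge `{(a,c+1),(a+1,c+1)}`. -/
def dualConfig (η : Config) : Config := fun e =>
  if e.2 then !η ((e.1.1, e.1.2 + 1), false) else !η ((e.1.1 + 1, e.1.2), true)

/-- Translation of configurations: `(T_t η)(e) = η (e - t)`. -/
def shift (t : Vertex) (η : Config) : Config := fun e => η (e.1 - t, e.2)

/-! A cluster violating the theorem has a finite nonempty set of open edges entering it from the
line `y = b - 1`, hence a rightmost one, at `(m, b)` say. Let every such rightmost `(m, b)` send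
unit mass to each `(x, b)` of its cluster. A vertex receives at most one unit, since a cluster
has at most one rightmost entering edge, whereas each sender sends infinite mass, because its
cluster meets the line `y = b` infinitely often. By translation invariance the expected mass sent
equals the expected mass received, so almost surely there are no senders. -/

open scoped ENNReal

theorem measurable_reflTransGen {Ω α : Type*} [MeasurableSpace Ω] [Countable α]
    {r : Ω → α → α → Prop} (hr : ∀ a b, Measurable fun ω => r ω a b) (a b : α) :
    Measurable fun ω => Relation.ReflTransGen (r ω) a b := by
  have : (fun ω => Relation.ReflTransGen (r ω) a b) = fun ω => ∃ l : List α,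
      List.IsChain (r ω) (a :: l) ∧ (a :: l).getLast (List.cons_ne_nil a l) = b := by
    funext ω
    exact propext ⟨List.exists_isChain_cons_of_relationReflTransGen,
      fun ⟨l, h1, h2⟩ => List.relationReflTransGen_of_exists_isChain_cons l h1 h2⟩
  rw [this]
  simp only [List.isChain_iff_getElem]
  fun_prop

theorem measurable_setOf_infinite {Ω ι : Type*} [MeasurableSpace Ω] [Countable ι]
    {p : ι → Ω → Prop} (hp : ∀ i, Measurable (p i)) :
    Measurable fun ω => {i | p i ω}.Infinite := by
  have : (fun ω => {i | p i ω}.Infinite) =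
      fun ω => ∀ t : Finset ι, ∃ i, i ∉ t ∧ p i ω := by
    funext ω
    refine propext ⟨fun h t => ?_, fun h hfin => ?_⟩
    · obtain ⟨i, hi, hit⟩ := h.exists_notMem_finset t
      exact ⟨i, hit, hi⟩
    · obtain ⟨i, hit, hi⟩ := h hfin.toFinset
      exact hit (hfin.mem_toFinset.2 hi)
  rw [this]
  fun_prop

theorem tsum_eq_tsum_of_add_invariant {G α : Type*} [AddCommGroup G] [AddCommMonoid α]
    [TopologicalSpace α] {f : G → G → α} (hf : ∀ m x s, f (m + s) (x + s) = f m x) (m : G) :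
    ∑' x, f m x = ∑' x, f x m := by
  rw [← (Equiv.subLeft (m + m)).tsum_eq fun x => f x m]
  refine tsum_congr fun x => ?_
  rw [← hf m x (m - x), Equiv.subLeft_apply]
  congr 1 <;> abel

theorem measure_eq_zero_of_tsum_measure_inter_ne_top {Ω ι : Type*} [MeasurableSpace Ω]
    [Countable ι] {μ : Measure Ω} {A : Set Ω} {R : ι → Set Ω} (hA : MeasurableSet A)
    (hR : ∀ i, MeasurableSet (R i)) (hinf : ∀ ω ∈ A, {i | ω ∈ R i}.Infinite)
    (hsum : ∑' i, μ (A ∩ R i) ≠ ∞) : μ A = 0 := by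
  have hcount : ∑' i, μ (A ∩ R i) = ∫⁻ ω in A, ∑' i, (R i).indicator 1 ω ∂μ := by
    rw [lintegral_tsum fun i => (measurable_one.indicator (hR i)).aemeasurable]
    refine tsum_congr fun i => ?_
    rw [lintegral_indicator_one (hR i), Measure.restrict_apply (hR i), Set.inter_comm]
  have htop : ∀ ω ∈ A, ∑' i, (R i).indicator 1 ω = ∞ := by
    intro ω hω
    have : Infinite {i | ω ∈ R i} := (hinf ω hω).to_subtype
    rw [← ENNReal.tsum_const_eq_top_of_ne_zero (α := {i | ω ∈ R i}) one_ne_zero,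
      tsum_subtype _ fun _ => 1]
    rfl
  rw [hcount, setLIntegral_congr_fun hA htop, setLIntegral_const] at hsum
  by_contra hA0
  exact hsum (ENNReal.top_mul hA0)

theorem measurable_openGraph_reachable (u v : Vertex) :
    Measurable fun η : Config => (openGraph η).Reachable u v := by
  simp only [SimpleGraph.reachable_iff_reflTransGen]
  refine measurable_reflTransGen (fun a b => ?_) u v
  simp only [openGraph]
  fun_prop

theorem joins_sub_iff {e : Edge} {t u v : Vertex} :
    joins (e.1 - t, e.2) (u - t) (v - t) ↔ joins e u v := by
  simp only [joins, sub_left_inj, sub_add_eq_add_sub]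

theorem openGraph_shift_adj {t u v : Vertex} {η : Config} :
    (openGraph (shift t η)).Adj u v ↔ (openGraph η).Adj (u - t) (v - t) := by
  simp only [openGraph, shift, ne_eq, sub_left_inj]
  refine and_congr_right fun _ => ⟨?_, ?_⟩
  · rintro ⟨e, he, hj⟩
    exact ⟨(e.1 - t, e.2), he, joins_sub_iff.2 hj⟩
  · rintro ⟨e, he, hj⟩
    refine ⟨(e.1 + t, e.2), by simpa using he, (joins_sub_iff (t := t)).1 ?_⟩
    simpa using hj

def shiftIso (t : Vertex) (η : Config) : openGraph (shift t η) ≃g openGraph η :=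
  ⟨Equiv.subRight t, openGraph_shift_adj.symm⟩

theorem openGraph_shift_reachable {t u v : Vertex} {η : Config} :
    (openGraph (shift t η)).Reachable u v ↔ (openGraph η).Reachable (u - t) (v - t) :=
  (shiftIso t η).reachable_iff.symm

def IsRightmostDownEdge (η : Config) (b m : ℤ) : Prop :=
  {x : ℤ | (openGraph η).Reachable (m, b) (x, b)}.Infinite ∧ η ((m, b - 1), true) = true ∧
    ∀ x, η ((x, b - 1), true) = true → (openGraph η).Reachable (m, b) (x, b) → x ≤ m

theorem measurable_isRightmostDownEdge (b m : ℤ) :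
    Measurable fun η => IsRightmostDownEdge η b m := by
  have hreach := measurable_openGraph_reachable
  exact (measurable_setOf_infinite fun x => hreach _ _).and (by fun_prop)

theorem isRightmostDownEdge_shift {η : Config} {b m s : ℤ} :
    IsRightmostDownEdge (shift (s, 0) η) b (m + s) ↔ IsRightmostDownEdge η b m := by
  simp only [IsRightmostDownEdge, openGraph_shift_reachable, shift, Prod.mk_sub_mk,
    add_sub_cancel_right, sub_zero]
  have himage : {x | (openGraph η).Reachable (m, b) (x - s, b)} =
      (· + s) '' {x | (openGraph η).Reachable (m, b) (x, b)} := by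
    ext x
    simp [sub_eq_add_neg]
  rw [himage, Set.infinite_image_iff (add_left_injective s).injOn]
  refine and_congr_right fun _ => and_congr_right fun _ =>
    ⟨fun h x he hr => ?_, fun h x he hr => ?_⟩
  · simpa using h (x + s) (by simpa using he) (by simpa using hr)
  · simpa using h (x - s) he hr

theorem IsRightmostDownEdge.eq_of_reachable {η : Config} {b m m' : ℤ}
    (h : IsRightmostDownEdge η b m) (h' : IsRightmostDownEdge η b m')
    (hr : (openGraph η).Reachable (m, b) (m', b)) : m = m' :=
  le_antisymm (h'.2.2 m h.2.1 hr.symm) (h.2.2 m' h'.2.1 hr)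

theorem exists_isRightmostDownEdge {η : Config} {b : ℤ} {v : Vertex}
    (hinf : {x : ℤ | (openGraph η).Reachable v (x, b)}.Infinite)
    (hne : {x : ℤ | η ((x, b - 1), true) = true ∧ (openGraph η).Reachable v (x, b)}.Nonempty)
    (hfin : {x : ℤ | η ((x, b - 1), true) = true ∧ (openGraph η).Reachable v (x, b)}.Finite) :
    ∃ m, IsRightmostDownEdge η b m := by
  obtain ⟨m, ⟨hm, hvm⟩, hmax⟩ := Set.exists_max_image _ id hfin hne
  exact ⟨m, hinf.mono fun x hx => hvm.symm.trans hx, hm,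
    fun x he hr => hmax x ⟨he, hvm.trans hr⟩⟩

theorem measure_isRightmostDownEdge (μ : Measure Config) [IsFiniteMeasure μ]
    (hinv : ∀ t : Vertex, MeasurePreserving (shift t) μ μ) (b m : ℤ) :
    μ {η | IsRightmostDownEdge η b m} = 0 := by
  let A (k : ℤ) : Set Config := {η | IsRightmostDownEdge η b k}
  let R (k x : ℤ) : Set Config := {η | (openGraph η).Reachable (k, b) (x, b)}
  have hA (k : ℤ) : MeasurableSet (A k) := (measurable_isRightmostDownEdge b k).setOf
  have hR (k x : ℤ) : MeasurableSet (R k x) := (measurable_openGraph_reachable _ _).setOf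
  let sent (k x : ℤ) : ℝ≥0∞ := μ (A k ∩ R k x)
  have hsent_invariant (k x s : ℤ) : sent (k + s) (x + s) = sent k x := by
    have hpre : shift (s, 0) ⁻¹' (A (k + s) ∩ R (k + s) (x + s)) = A k ∩ R k x := by
      ext η
      simp [A, R, isRightmostDownEdge_shift, openGraph_shift_reachable]
    simp only [sent]
    rw [← (hinv (s, 0)).measure_preimage ((hA _).inter (hR _ _)).nullMeasurableSet, hpre]
  have hreceived_le : ∑' x, sent x m ≤ μ Set.univ := by
    refine tsum_measure_le_measure_univ (fun x => ((hA x).inter (hR x m)).nullMeasurableSet)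
      fun x y hxy => Disjoint.aedisjoint (Set.disjoint_left.2 ?_)
    rintro η ⟨hx, hxm⟩ ⟨hy, hym⟩
    exact hxy (hx.eq_of_reachable hy (hxm.trans hym.symm))
  refine measure_eq_zero_of_tsum_measure_inter_ne_top (hA m) (hR m) (fun η hη => hη.1) ?_
  rw [tsum_eq_tsum_of_add_invariant hsent_invariant m]
  exact ne_top_of_le_ne_top (measure_ne_top μ _) hreceived_le

/-- For a translation-invariant percolation on `ℤ²`, almost
surely, for every `b` and every cluster `C` of `G_η` meeting the line `y = b`
in infinitely many vertices, the set of `x` such that the vertical edge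
`{(x,b-1),(x,b)}` is open and `(x,b) ∈ C` is empty or infinite. -/
theorem downward_edges_from_infinite_baseline_empty_or_infinite
    (μ : Measure Config) [IsProbabilityMeasure μ]
    (hinv : ∀ t : Vertex, MeasurePreserving (shift t) μ μ) :
    ∀ᵐ η ∂μ, ∀ (b : ℤ) (C : Set Vertex), IsCluster η C →
      {x : ℤ | (x, b) ∈ C}.Infinite →
      ({x : ℤ | η ((x, b - 1), true) = true ∧ (x, b) ∈ C} = ∅ ∨
       {x : ℤ | η ((x, b - 1), true) = true ∧ (x, b) ∈ C}.Infinite) := by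
  have hae : ∀ᵐ η ∂μ, ∀ b m, ¬ IsRightmostDownEdge η b m := by
    simp only [ae_all_iff]
    exact fun b m => measure_eq_zero_iff_ae_notMem.1 (measure_isRightmostDownEdge μ hinv b m)
  filter_upwards [hae] with η hη b C hC hinf
  obtain ⟨v, rfl⟩ := hC
  refine or_iff_not_imp_left.2 fun hne hfin => ?_
  obtain ⟨m, hm⟩ := exists_isRightmostDownEdge hinf (Set.nonempty_iff_ne_empty.2 hne) hfin
  exact hη b m hm
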